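/- arXiv:funct-an/9710002 — 7 statements merged into one kernel-verified Lean document; each statement's English description precedes it below -/
import Mathlib

section
/- For every z in the Hilbert ball B_H, every C¹ curve ψ : [0,1] → B_H with ψ(0) = 0 and ψ(1) = z satisfies L(ψ) ≥ (1/2)·log((1 + ‖z‖)/(1 − ‖z‖)); consequently the Poincaré distance satisfies d(0, z) = (1/2)·log((1 + ‖z‖)/(1 − ‖z‖)), i.e. the straight segment t ↦ t·z is a minimizing geodesic from 0 to z. -/
/-- The Kähler "energy" integrand on the Hilbert ball:
`K(z,u) = ‖u‖²/(1−‖z‖²) + |⟨z,u⟩|²/(1−‖z‖²)²`. -/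
noncomputable def ballK {H : Type*} [NormedAddCommGroup H] [InnerProductSpace ℂ H]
    (z u : H) : ℝ :=
  ‖u‖ ^ 2 / (1 - ‖z‖ ^ 2) + ‖(inner ℂ z u : ℂ)‖ ^ 2 / (1 - ‖z‖ ^ 2) ^ 2

/-- `ψ` is a C¹ curve in the Hilbert ball with derivative `ψ'`. -/
def IsC1BallCurve {H : Type*} [NormedAddCommGroup H] [InnerProductSpace ℂ H]
    (ψ ψ' : ℝ → H) : Prop :=
  (∀ t ∈ Set.Icc (0 : ℝ) 1, ‖ψ t‖ < 1) ∧
  (∀ t ∈ Set.Icc (0 : ℝ) 1, HasDerivAt ψ (ψ' t) t) ∧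
  ContinuousOn ψ' (Set.Icc (0 : ℝ) 1)

/-- The hyperbolic length of a curve in the Hilbert ball. -/
noncomputable def hypLength {H : Type*} [NormedAddCommGroup H] [InnerProductSpace ℂ H]
    (ψ ψ' : ℝ → H) : ℝ :=
  ∫ t in (0 : ℝ)..1, Real.sqrt (ballK (ψ t) (ψ' t))

/-- The Poincaré distance on the Hilbert ball: the infimum of hyperbolic lengths of C¹
curves joining `u` to `v` inside the ball. -/
noncomputable def pDist {H : Type*} [NormedAddCommGroup H] [InnerProductSpace ℂ H]
    (u v : H) : ℝ :=
  sInf { r | ∃ ψ ψ' : ℝ → H, IsC1BallCurve ψ ψ' ∧ ψ 0 = u ∧ ψ 1 = v ∧ r = hypLength ψ ψ' }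

/-!
By Cauchy–Schwarz, `|⟨x, u⟩| ≤ ‖x‖ ‖u‖` turns `K(x, u)` into at least
`(Re ⟨x, u⟩ / (‖x‖ (1 - ‖x‖²)))²`, the square of the speed of `artanh ‖ψ t‖` along a curve `ψ`
through `x` with velocity `u`. So on any time interval where the curve avoids `0`, hyperbolic
length dominates the increase of `artanh ‖ψ‖`; applied after the last visit of the curve to `0`,
this gives `L(ψ) ≥ artanh ‖z‖`. The segment `t ↦ t • z` has exactly this length.
-/

open Set Real
open scoped InnerProductSpace

namespace Real

theorem hasDerivAt_artanh {x : ℝ} (hx : x ∈ Ioo (-1) 1) :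
    HasDerivAt artanh (1 - x ^ 2)⁻¹ x := by
  have hlog : HasDerivAt (fun y => 1 / 2 * (log (1 + y) - log (1 - y)))
      (1 / 2 * (1 / (1 + x) - (-1) / (1 - x))) x :=
    ((((hasDerivAt_id x).const_add 1).log (by simp; linarith [hx.1])).sub
      (((hasDerivAt_id x).const_sub 1).log (by simp; linarith [hx.2]))).const_mul _
  refine (hlog.congr_deriv ?_).congr_of_eventuallyEq ?_
  · have h₁ : 1 + x ≠ 0 := by linarith [hx.1]
    have h₂ : 1 - x ≠ 0 := by linarith [hx.2]
    have h₃ : 1 - x ^ 2 ≠ 0 := by nlinarith [hx.1, hx.2]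
    field_simp
    ring
  · filter_upwards [Ioo_mem_nhds hx.1 hx.2] with y hy
    rw [artanh_eq_half_log (Ioo_subset_Icc_self hy),
      log_div (by linarith [hy.1]) (by linarith [hy.2])]

end Real

theorem HasDerivAt.norm {F : Type*} [NormedAddCommGroup F] [InnerProductSpace ℝ F]
    {f : ℝ → F} {f' : F} {x : ℝ} (hf : HasDerivAt f f' x) (h0 : f x ≠ 0) :
    HasDerivAt (‖f ·‖) (⟪f x, f'⟫_ℝ / ‖f x‖) x := by
  have hsqrt := (Real.hasDerivAt_sqrt (by positivity)).comp x hf.norm_sq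
  simp only [Function.comp_def, Real.sqrt_sq (norm_nonneg _)] at hsqrt
  refine hsqrt.congr_deriv ?_
  have : ‖f x‖ ≠ 0 := norm_ne_zero_iff.2 h0
  field_simp

theorem ContinuousOn.exists_last_zero {E : Type*} [TopologicalSpace E] [T1Space E] [Zero E]
    {f : ℝ → E} {a b : ℝ} (hab : a ≤ b) (hf : ContinuousOn f (Icc a b)) (ha : f a = 0) :
    ∃ c ∈ Icc a b, f c = 0 ∧ ∀ t ∈ Ioc c b, f t ≠ 0 := by
  set S := Icc a b ∩ f ⁻¹' {0}
  have hS : IsClosed S := hf.preimage_isClosed_of_isClosed isClosed_Icc isClosed_singleton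
  have hbdd : BddAbove S := bddAbove_Icc.mono inter_subset_left
  obtain ⟨hc, hfc⟩ := hS.csSup_mem ⟨a, left_mem_Icc.2 hab, ha⟩ hbdd
  refine ⟨sSup S, hc, hfc, fun t ht hft => ?_⟩
  exact (le_csSup hbdd ⟨⟨hc.1.trans ht.1.le, ht.2⟩, hft⟩).not_gt ht.1

section HilbertBall

variable {H : Type*} [NormedAddCommGroup H] [InnerProductSpace ℂ H]

theorem re_inner_div_le_sqrt_ballK {x : H} (u : H) (hx₀ : x ≠ 0) (hx₁ : ‖x‖ < 1) :
    (1 - ‖x‖ ^ 2)⁻¹ * ((⟪x, u⟫_ℂ).re / ‖x‖) ≤ √(ballK x u) := by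
  set r := ‖x‖
  set b := ‖⟪x, u⟫_ℂ‖
  have hr : 0 < r := norm_pos_iff.2 hx₀
  have hd : 0 < 1 - r ^ 2 := by nlinarith
  have hre : |(⟪x, u⟫_ℂ).re| ≤ b := Complex.abs_re_le_norm _
  have hcs : b ≤ r * ‖u‖ := norm_inner_le_norm x u
  apply Real.le_sqrt_of_sq_le
  calc ((1 - r ^ 2)⁻¹ * ((⟪x, u⟫_ℂ).re / r)) ^ 2
      = (⟪x, u⟫_ℂ).re ^ 2 / (r ^ 2 * (1 - r ^ 2) ^ 2) := by field_simp
    _ ≤ b ^ 2 / (r ^ 2 * (1 - r ^ 2) ^ 2) := by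
      gcongr ?_ / _
      exact sq_le_sq' (abs_le.1 hre).1 (abs_le.1 hre).2
    _ = (b / r) ^ 2 / (1 - r ^ 2) + b ^ 2 / (1 - r ^ 2) ^ 2 := by field_simp; ring
    _ ≤ ballK x u := by
      unfold ballK
      gcongr
      rw [div_le_iff₀ hr]
      linarith

theorem hasDerivAt_artanh_norm {ψ : ℝ → H} {u : H} {t : ℝ} (hψ : HasDerivAt ψ u t)
    (h₀ : ψ t ≠ 0) (h₁ : ‖ψ t‖ < 1) :
    HasDerivAt (fun s => artanh ‖ψ s‖) ((1 - ‖ψ t‖ ^ 2)⁻¹ * ((⟪ψ t, u⟫_ℂ).re / ‖ψ t‖)) t := by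
  let _ := InnerProductSpace.complexToReal (G := H)
  simpa only [Function.comp_def, real_inner_eq_re_inner ℂ, RCLike.re_to_complex] using
    (hasDerivAt_artanh ⟨by linarith [norm_nonneg (ψ t)], h₁⟩).comp t (hψ.norm h₀)

-- No hypothesis on `t`: when `t ^ 2 * ‖z‖ ^ 2 = 1` both sides are `0`, as `x / 0 = 0`.
theorem ballK_smul_self (t : ℝ) (z : H) :
    ballK (t • z) z = (‖z‖ / (1 - t ^ 2 * ‖z‖ ^ 2)) ^ 2 := by
  have hinner : ‖⟪t • z, z⟫_ℂ‖ = |t| * ‖z‖ ^ 2 := by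
    rw [RCLike.real_smul_eq_coe_smul (K := ℂ), inner_smul_left, norm_mul, Complex.norm_conj]
    simp
  rw [ballK, hinner, norm_smul, Real.norm_eq_abs, mul_pow, mul_pow, sq_abs]
  field_simp
  ring

namespace IsC1BallCurve

variable {ψ ψ' : ℝ → H}

theorem continuousOn (hc : IsC1BallCurve ψ ψ') : ContinuousOn ψ (Icc 0 1) :=
  fun t ht => (hc.2.1 t ht).continuousAt.continuousWithinAt

theorem continuousOn_sqrt_ballK (hc : IsC1BallCurve ψ ψ') :
    ContinuousOn (fun t => √(ballK (ψ t) (ψ' t))) (Icc 0 1) := by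
  have hd : ∀ t ∈ Icc (0 : ℝ) 1, 1 - ‖ψ t‖ ^ 2 ≠ 0 := fun t ht => by
    nlinarith [hc.1 t ht, norm_nonneg (ψ t)]
  have hd₂ : ∀ t ∈ Icc (0 : ℝ) 1, (1 - ‖ψ t‖ ^ 2) ^ 2 ≠ 0 := fun t ht => pow_ne_zero 2 (hd t ht)
  have hψ := hc.continuousOn
  have hψ' := hc.2.2
  unfold ballK
  fun_prop (disch := assumption)

theorem artanh_norm_le_hypLength (hc : IsC1BallCurve ψ ψ') (h₀ : ψ 0 = 0) :
    artanh ‖ψ 1‖ ≤ hypLength ψ ψ' := by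
  obtain ⟨c, hc01, hψc, hne⟩ := hc.continuousOn.exists_last_zero zero_le_one h₀
  have hsub : Icc c 1 ⊆ Icc 0 1 := Icc_subset_Icc_left hc01.1
  have hK := hc.continuousOn_sqrt_ballK
  have hmem : ∀ t ∈ Icc c 1, ‖ψ t‖ ∈ Ioo (-1) 1 := fun t ht =>
    ⟨neg_one_lt_zero.trans_le (norm_nonneg _), hc.1 t (hsub ht)⟩
  have hftc : artanh ‖ψ 1‖ - artanh ‖ψ c‖ ≤ ∫ t in c..1, √(ballK (ψ t) (ψ' t)) := by
    refine intervalIntegral.sub_le_integral_of_hasDeriv_right_of_le (g := fun t => artanh ‖ψ t‖)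
      (g' := fun t => (1 - ‖ψ t‖ ^ 2)⁻¹ * ((⟪ψ t, ψ' t⟫_ℂ).re / ‖ψ t‖)) hc01.2 (fun t ht => ?_)
      (fun t ht => ?_) ((hK.mono hsub).integrableOn_Icc) (fun t ht => ?_)
    · exact (hasDerivAt_artanh (hmem t ht)).continuousAt.comp_continuousWithinAt (f := (‖ψ ·‖))
        (hc.continuousOn.mono hsub t ht).norm
    · exact (hasDerivAt_artanh_norm (hc.2.1 t (hsub (Ioo_subset_Icc_self ht)))
        (hne t (Ioo_subset_Ioc_self ht)) (hmem t (Ioo_subset_Icc_self ht)).2).hasDerivWithinAt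
    · exact re_inner_div_le_sqrt_ballK _ (hne t (Ioo_subset_Ioc_self ht))
        (hmem t (Ioo_subset_Icc_self ht)).2
  have hinit : 0 ≤ ∫ t in 0..c, √(ballK (ψ t) (ψ' t)) :=
    intervalIntegral.integral_nonneg hc01.1 fun _ _ => sqrt_nonneg _
  rw [hψc, norm_zero, artanh_zero, sub_zero] at hftc
  rw [hypLength, ← intervalIntegral.integral_add_adjacent_intervals
    ((hK.mono (Icc_subset_Icc_right hc01.2)).intervalIntegrable_of_Icc hc01.1)
    ((hK.mono hsub).intervalIntegrable_of_Icc hc01.2)]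
  linarith

end IsC1BallCurve

theorem isC1BallCurve_segment {z : H} (hz : ‖z‖ < 1) :
    IsC1BallCurve (fun t : ℝ => t • z) fun _ => z := by
  refine ⟨fun t ht => ?_, fun t _ => ?_, continuousOn_const⟩
  · rw [norm_smul, Real.norm_of_nonneg ht.1]
    nlinarith [norm_nonneg z, ht.2]
  · simpa using (hasDerivAt_id t).smul_const z

theorem hypLength_segment {z : H} (hz : ‖z‖ < 1) :
    hypLength (fun t : ℝ => t • z) (fun _ => z) = artanh ‖z‖ := by
  have hmem : ∀ t ∈ uIcc (0 : ℝ) 1, t * ‖z‖ ∈ Ioo (-1) 1 := fun t ht => by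
    rw [uIcc_of_le zero_le_one] at ht
    constructor <;> nlinarith [norm_nonneg z, ht.1, ht.2]
  have hderiv : ∀ t ∈ uIcc (0 : ℝ) 1,
      HasDerivAt (fun s => artanh (s * ‖z‖)) (√(ballK (t • z) z)) t := fun t ht => by
    have hd : 0 < 1 - t ^ 2 * ‖z‖ ^ 2 := by nlinarith [(hmem t ht).1, (hmem t ht).2]
    rw [ballK_smul_self, sqrt_sq (div_nonneg (norm_nonneg z) hd.le)]
    refine ((hasDerivAt_artanh (hmem t ht)).comp t (hasDerivAt_mul_const ‖z‖)).congr_deriv ?_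
    rw [mul_pow, div_eq_inv_mul]
  rw [hypLength, intervalIntegral.integral_eq_sub_of_hasDerivAt hderiv
    ((isC1BallCurve_segment hz).continuousOn_sqrt_ballK.intervalIntegrable_of_Icc zero_le_one)]
  simp

end HilbertBall

/-- every C¹ curve in the Hilbert ball from `0` to `z` has hyperbolic length at
least `(1/2)·log((1 + ‖z‖)/(1 − ‖z‖))`, and consequently
`d(0,z) = (1/2)·log((1 + ‖z‖)/(1 − ‖z‖))`. -/
theorem radial_curve_is_minimizing
    {H : Type*} [NormedAddCommGroup H] [InnerProductSpace ℂ H]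
    (z : H) (hz : ‖z‖ < 1) :
    (∀ ψ ψ' : ℝ → H, IsC1BallCurve ψ ψ' → ψ 0 = 0 → ψ 1 = z →
      (1 / 2) * Real.log ((1 + ‖z‖) / (1 - ‖z‖)) ≤ hypLength ψ ψ') ∧
    pDist (0 : H) z = (1 / 2) * Real.log ((1 + ‖z‖) / (1 - ‖z‖)) := by
  rw [← artanh_eq_half_log ⟨neg_one_lt_zero.le.trans (norm_nonneg z), hz.le⟩]
  have hlower : ∀ ψ ψ' : ℝ → H, IsC1BallCurve ψ ψ' → ψ 0 = 0 → ψ 1 = z →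
      artanh ‖z‖ ≤ hypLength ψ ψ' := by
    rintro ψ ψ' hc h₀ rfl
    exact hc.artanh_norm_le_hypLength h₀
  refine ⟨hlower, IsLeast.csInf_eq ⟨?_, ?_⟩⟩
  · exact ⟨_, _, isC1BallCurve_segment hz, zero_smul ℝ z, one_smul ℝ z,
      (hypLength_segment hz).symm⟩
  · rintro _ ⟨ψ, ψ', hc, h₀, h₁, rfl⟩
    exact hlower ψ ψ' hc h₀ h₁
end

section
/- Let T be the bounded operator on H̃ with block data (A, x, y, a), i.e. T(z,λ) = (Az + λx, ⟨y,z⟩ + λa). Then T* ∘ ε ∘ T = ε if and only if the following three conditions hold: A*A = I + (z ↦ ⟨y,z⟩·y) (that is, A*A equals the identity plus the rank-one operator z ↦ ⟨y,z⟩y), A*x = a·y, and |a|² − ‖x‖² = 1. -/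
/-- The extended Hilbert space `H̃ = H ⊕ ℂ` (Hilbert space direct sum). -/
noncomputable abbrev ExtH (H : Type*) [NormedAddCommGroup H] [InnerProductSpace ℂ H] :=
  WithLp 2 (H × ℂ)

/-- The element `(z, a)` of `H̃`. -/
noncomputable def mk2 {H : Type*} [NormedAddCommGroup H] [InnerProductSpace ℂ H]
    (z : H) (a : ℂ) : ExtH H :=
  (WithLp.equiv 2 (H × ℂ)).symm (z, a)

/-!
`T* ε T = ε` says exactly that `T` preserves the indefinite form
`[(z, l), (w, m)] = ⟪(z, l), ε (w, m)⟫ = -⟪z, w⟫ + conj l * m`. Testing this on the pairs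
`((z, 0), (w, 0))`, `((0, 1), (w, 0))` and `((0, 1), (0, 1))` gives the three block conditions;
conversely, these three identities recombine sesquilinearly into the full one.
-/

open ComplexConjugate ContinuousLinearMap

section Adjoint

variable {𝕜 E F : Type*} [RCLike 𝕜] [NormedAddCommGroup E] [InnerProductSpace 𝕜 E] [CompleteSpace E]
  [NormedAddCommGroup F] [InnerProductSpace 𝕜 F] [CompleteSpace F]

theorem ContinuousLinearMap.adjoint_apply_eq_iff (A : E →L[𝕜] F) (u : F) (v : E) :
    adjoint A u = v ↔ ∀ w, inner 𝕜 u (A w) = inner 𝕜 v w := by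
  simp only [← adjoint_inner_left A]
  exact ⟨fun h w => h ▸ rfl, ext_inner_right 𝕜⟩

theorem ContinuousLinearMap.adjoint_comp_comp_self_eq_iff (S J : E →L[𝕜] E) :
    adjoint S ∘L J ∘L S = J ↔ ∀ u v, inner 𝕜 (S u) (J (S v)) = inner 𝕜 u (J v) := by
  simp only [← adjoint_inner_right S]
  refine ⟨fun h u v => congrArg _ (DFunLike.congr_fun h v), fun h => ?_⟩
  ext v
  exact ext_inner_left 𝕜 fun u => h u v

end Adjoint

section Block

variable {H : Type*} [NormedAddCommGroup H] [InnerProductSpace ℂ H]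

theorem inner_mk2 (z w : H) (l m : ℂ) :
    inner ℂ (mk2 z l) (mk2 w m) = inner ℂ z w + conj l * m := by
  simp [mk2, WithLp.prod_inner_apply, RCLike.inner_apply, mul_comm]

theorem forall_mk2 {p : ExtH H → Prop} : (∀ v, p v) ↔ ∀ z l, p (mk2 z l) :=
  ⟨fun h _ _ => h _, fun h v => h (WithLp.ofLp v).1 (WithLp.ofLp v).2⟩

theorem norm_sq_sub_norm_sq_eq_one_iff (a : ℂ) (x : H) :
    ‖a‖ ^ 2 - ‖x‖ ^ 2 = 1 ↔ conj a * a - inner ℂ x x = 1 := by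
  rw [RCLike.conj_mul, inner_self_eq_norm_sq_to_K]
  norm_cast
  exact Complex.ofReal_eq_one.symm

theorem block_preserves_indefinite_inner_iff (A : H →L[ℂ] H) (x y : H) (a : ℂ) :
    (∀ z l w m, -inner ℂ (A z + l • x) (A w + m • x)
        + conj (inner ℂ y z + l * a) * (inner ℂ y w + m * a) = -inner ℂ z w + conj l * m) ↔
      (∀ z w, inner ℂ (A z) (A w) = inner ℂ z w + conj (inner ℂ y z) * inner ℂ y w) ∧
        (∀ w, inner ℂ x (A w) = conj a * inner ℂ y w) ∧ conj a * a - inner ℂ x x = 1 := by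
  constructor
  · intro h
    refine ⟨fun z w => ?_, fun w => ?_, ?_⟩
    · have := h z 0 w 0
      simp only [zero_smul, add_zero, zero_mul, map_zero, mul_zero] at this
      linear_combination -this
    · have := h 0 1 w 0
      simp only [map_zero, zero_add, one_smul, zero_smul, add_zero, inner_zero_left,
        inner_zero_right, map_one, one_mul, zero_mul, mul_zero] at this
      linear_combination -this
    · have := h 0 1 0 1
      simp only [map_zero, zero_add, one_smul, inner_zero_right, map_one, one_mul] at this
      linear_combination this
  · rintro ⟨hA, hx, ha⟩ z l w m
    have hx' : inner ℂ (A z) x = a * conj (inner ℂ y z) := by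
      rw [← inner_conj_symm, hx z, map_mul, RCLike.conj_conj]
    simp only [inner_add_left, inner_add_right, inner_smul_left, inner_smul_right, map_add, map_mul]
    linear_combination -hA z w - conj l * hx w - m * hx' + conj l * m * ha

end Block

/-- an operator `T` on `H̃` with block data `(A, x, y, a)` satisfies
`T* ∘ ε ∘ T = ε` iff `A*A = I + (z ↦ ⟨y,z⟩y)`, `A*x = a•y` and `|a|² − ‖x‖² = 1`. -/
theorem inhomogeneous_unitary_iff_block_conditions
    {H : Type*} [NormedAddCommGroup H] [InnerProductSpace ℂ H] [CompleteSpace H]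
    (ε : ExtH H →L[ℂ] ExtH H) (hε : ∀ (z : H) (l : ℂ), ε (mk2 z l) = mk2 (-z) l)
    (T : ExtH H →L[ℂ] ExtH H) (A : H →L[ℂ] H) (x y : H) (a : ℂ)
    (hT : ∀ (z : H) (l : ℂ), T (mk2 z l) = mk2 (A z + l • x) ((inner ℂ y z : ℂ) + l * a)) :
    (adjoint T ∘L ε ∘L T = ε) ↔
      ((∀ z : H, adjoint A (A z) = z + (inner ℂ y z : ℂ) • y) ∧
        adjoint A x = a • y ∧ ‖a‖ ^ 2 - ‖x‖ ^ 2 = 1) := by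
  rw [adjoint_comp_comp_self_eq_iff]
  simp only [forall_mk2, hT, hε, inner_mk2, inner_neg_right]
  rw [block_preserves_indefinite_inner_iff]
  simp only [adjoint_apply_eq_iff, inner_add_left, inner_smul_left, norm_sq_sub_norm_sq_eq_one_iff]
end

section
/- Let T ∈ U₁(H) have block data (A, x, y, a). Then for every z ∈ B_H one has ⟨y,z⟩ + a ≠ 0 and ‖(Az + x)/(⟨y,z⟩ + a)‖ < 1; that is, the generalized linear fractional transformation φ_T is a well-defined map from B_H into B_H. -/
/-! The map `w ↦ ⟪ε w, w⟫` is the indefinite form `|λ|² - ‖z‖²` on `H̃`, and `T ∈ U₁(H)`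
preserves it. Applied to `w = (z, 1)` with `‖z‖ < 1` this gives
`|⟨y,z⟩ + a|² - ‖Az + x‖² = 1 - ‖z‖² > 0`. -/

open ContinuousLinearMap

theorem inner_apply_apply_self_of_adjoint_comp_comp_eq {𝕜 E : Type*} [RCLike 𝕜]
    [NormedAddCommGroup E] [InnerProductSpace 𝕜 E] [CompleteSpace E]
    {ε T : E →L[𝕜] E} (hT : adjoint T ∘L ε ∘L T = ε) (w : E) :
    inner 𝕜 (ε (T w)) (T w) = inner 𝕜 (ε w) w := by
  conv_rhs => rw [← hT]
  rw [comp_apply, comp_apply, adjoint_inner_left]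

section ExtH

variable {H : Type*} [NormedAddCommGroup H] [InnerProductSpace ℂ H]

theorem inner_mk2_mk2 (z w : H) (a b : ℂ) :
    inner ℂ (mk2 z a) (mk2 w b) = inner ℂ z w + inner ℂ a b := rfl

theorem inner_mk2_neg_self (z : H) (l : ℂ) :
    inner ℂ (mk2 (-z) l) (mk2 z l) = ((‖l‖ ^ 2 - ‖z‖ ^ 2 : ℝ) : ℂ) := by
  rw [inner_mk2_mk2, inner_neg_left, inner_self_eq_norm_sq_to_K, inner_self_eq_norm_sq_to_K]
  push_cast
  exact neg_add_eq_sub _ _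

end ExtH

theorem ne_zero_and_norm_inv_smul_lt_one {E : Type*} [NormedAddCommGroup E] [NormedSpace ℂ E]
    {c : ℂ} {v : E} (h : ‖v‖ < ‖c‖) : c ≠ 0 ∧ ‖c⁻¹ • v‖ < 1 := by
  have hc : 0 < ‖c‖ := (norm_nonneg v).trans_lt h
  refine ⟨norm_pos_iff.mp hc, ?_⟩
  rwa [norm_smul, norm_inv, inv_mul_lt_iff₀ hc, mul_one]

open ContinuousLinearMap in
/-- if `T ∈ U₁(H)` (i.e. `T* ∘ ε ∘ T = ε`) has block data `(A, x, y, a)`,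
then for every `z` in the Hilbert ball one has `⟨y,z⟩ + a ≠ 0` and
`‖(Az + x)/(⟨y,z⟩ + a)‖ < 1`, so the generalized linear fractional transformation `φ_T`
maps the Hilbert ball into itself. -/
theorem moebius_maps_ball_to_ball
    {H : Type*} [NormedAddCommGroup H] [InnerProductSpace ℂ H] [CompleteSpace H]
    (ε : ExtH H →L[ℂ] ExtH H) (hε : ∀ (z : H) (l : ℂ), ε (mk2 z l) = mk2 (-z) l)
    (T : ExtH H →L[ℂ] ExtH H) (hT : adjoint T ∘L ε ∘L T = ε)
    (A : H →L[ℂ] H) (x y : H) (a : ℂ)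
    (hTblock : ∀ (z : H) (l : ℂ),
      T (mk2 z l) = mk2 (A z + l • x) ((inner ℂ y z : ℂ) + l * a)) :
    ∀ z : H, ‖z‖ < 1 →
      ((inner ℂ y z : ℂ) + a ≠ 0 ∧ ‖((inner ℂ y z : ℂ) + a)⁻¹ • (A z + x)‖ < 1) := by
  intro z hz
  have hform := inner_apply_apply_self_of_adjoint_comp_comp_eq hT (mk2 z 1)
  rw [hTblock, hε, hε, inner_mk2_neg_self, inner_mk2_neg_self, one_smul, one_mul,
    Complex.ofReal_inj, norm_one] at hform
  apply ne_zero_and_norm_inv_smul_lt_one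
  have hz2 : ‖z‖ ^ 2 < 1 := by nlinarith [norm_nonneg z]
  exact lt_of_pow_lt_pow_left₀ 2 (norm_nonneg _) (by linarith)
end

section
/- The group U₁(H) acts transitively on the Hilbert ball: for all u, v ∈ B_H there exists T ∈ U₁(H) such that φ_T(u) = v. In particular, for u ∈ B_H, writing m = (1 − ‖u‖²)^{-1/2}, the operator T with block data A = I + (m − 1)·(z ↦ ⟨u,z⟩u/‖u‖²) (A = I if u = 0), x = m·u, y = m·u, a = m belongs to U₁(H) and satisfies φ_T(0) = u. -/
/-- The generalized linear fractional (Möbius) transformation with block data `(A,x,y,a)`: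
`φ(z) = (Az + x)/(⟨y,z⟩ + a)`. -/
noncomputable def moebius {H : Type*} [NormedAddCommGroup H] [InnerProductSpace ℂ H]
    (A : H →L[ℂ] H) (x y : H) (a : ℂ) (z : H) : H :=
  ((inner ℂ y z : ℂ) + a)⁻¹ • (A z + x)

/-! For `u` in the ball let `m = (1 - ‖u‖²)^{-1/2}` and let `T_u` be the boost with block data
`(A_u, m u, m u, m)`. Because `A_u` is self-adjoint with `A_u u = m u` and
`A_u² = I + m² ⟨u, ·⟩ u`, and `‖m u‖² = m² - 1`, the boost preserves the form
`⟨(z, λ), ε (w, μ)⟩`, so `T_u ∈ U₁(H)`; it sends `(0, 1)` to `m (u, 1)`, so `φ_{T_u}(0) = u`.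
Since `A_{-u} = A_u`, the boost `T_{-u}` sends `(u, 1)` to a nonzero multiple of `(0, 1)`, hence
`T_v ∘ T_{-u} ∈ U₁(H)` maps `u` to `v`. Its block data exist because every bounded operator on
`H ⊕ ℂ` is a block operator, the entry `y` being the Riesz representative of `z ↦ (T (z, 0)).2`.
-/

open ContinuousLinearMap
open scoped InnerProductSpace

section Block

variable {H : Type*} [NormedAddCommGroup H] [InnerProductSpace ℂ H]

lemma mk2_eq_mk2_iff {z w : H} {l c : ℂ} : mk2 z l = mk2 w c ↔ z = w ∧ l = c := by
  simp [mk2]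

lemma inner_mk2_mk2_s7 (z w : H) (l c : ℂ) :
    ⟪mk2 z l, mk2 w c⟫_ℂ = ⟪z, w⟫_ℂ + starRingEnd ℂ l * c := by
  simp [mk2, WithLp.prod_inner_apply, mul_comm]

noncomputable def blockCLM (A : H →L[ℂ] H) (x y : H) (a : ℂ) : ExtH H →L[ℂ] ExtH H :=
  (WithLp.prodContinuousLinearEquiv 2 ℂ H ℂ).symm.toContinuousLinearMap ∘L
    (((A ∘L fst ℂ H ℂ) + (snd ℂ H ℂ).smulRight x).prod
      ((innerSL ℂ y ∘L fst ℂ H ℂ) + a • snd ℂ H ℂ)) ∘L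
    (WithLp.prodContinuousLinearEquiv 2 ℂ H ℂ).toContinuousLinearMap

lemma blockCLM_apply (A : H →L[ℂ] H) (x y : H) (a : ℂ) (z : H) (l : ℂ) :
    blockCLM A x y a (mk2 z l) = mk2 (A z + l • x) (⟪y, z⟫_ℂ + l * a) := by
  simp [blockCLM, mk2, mul_comm]

lemma exists_blockCLM_eq [CompleteSpace H] (T : ExtH H →L[ℂ] ExtH H) :
    ∃ A x y a, T = blockCLM A x y a := by
  let e := (WithLp.prodContinuousLinearEquiv 2 ℂ H ℂ).toContinuousLinearMap
  let j := (WithLp.prodContinuousLinearEquiv 2 ℂ H ℂ).symm.toContinuousLinearMap ∘L inl ℂ H ℂ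
  refine ⟨fst ℂ H ℂ ∘L e ∘L T ∘L j, (T (mk2 0 1)).fst,
    (InnerProductSpace.toDual ℂ H).symm (snd ℂ H ℂ ∘L e ∘L T ∘L j), (T (mk2 0 1)).snd, ?_⟩
  ext ⟨z, l⟩ : 1
  change T (mk2 z l) = blockCLM _ _ _ _ (mk2 z l)
  have hzl : mk2 z l = mk2 z 0 + l • mk2 (0 : H) 1 := by
    simp [mk2, ← WithLp.toLp_smul, ← WithLp.toLp_add]
  rw [blockCLM_apply, InnerProductSpace.toDual_symm_apply, hzl, map_add, map_smul,
    WithLp.ext_iff]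
  ext <;> simp [mk2, e, j]

lemma moebius_eq_of_blockCLM_apply {A : H →L[ℂ] H} {x y z w : H} {a c : ℂ}
    (h : blockCLM A x y a (mk2 z 1) = mk2 (c • w) c) (hc : c ≠ 0) :
    moebius A x y a z = w := by
  rw [blockCLM_apply, mk2_eq_mk2_iff, one_smul, one_mul] at h
  rw [moebius, h.1, h.2, inv_smul_smul₀ hc]

variable [CompleteSpace H]

/-- `T ∈ U₁(H)`. -/
def IsPseudoUnitary (ε T : ExtH H →L[ℂ] ExtH H) : Prop :=
  adjoint T ∘L ε ∘L T = ε

lemma isPseudoUnitary_iff_inner {ε T : ExtH H →L[ℂ] ExtH H} :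
    IsPseudoUnitary ε T ↔ ∀ p q, ⟪T p, ε (T q)⟫_ℂ = ⟪p, ε q⟫_ℂ := by
  simp only [IsPseudoUnitary, ContinuousLinearMap.ext_iff, comp_apply]
  refine ⟨fun h p q => ?_, fun h q => ext_inner_left ℂ fun p => ?_⟩
  · rw [← adjoint_inner_right, h]
  · rw [adjoint_inner_right, h]

lemma IsPseudoUnitary.comp {ε S T : ExtH H →L[ℂ] ExtH H} (hS : IsPseudoUnitary ε S)
    (hT : IsPseudoUnitary ε T) : IsPseudoUnitary ε (S ∘L T) := by
  rw [isPseudoUnitary_iff_inner] at *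
  intro p q
  simp only [comp_apply, hS, hT]

lemma blockCLM_isPseudoUnitary {ε : ExtH H →L[ℂ] ExtH H}
    (hε : ∀ z l, ε (mk2 z l) = mk2 (-z) l) {A : H →L[ℂ] H} {x : H} {a : ℝ}
    (hA : A.IsSymmetric) (hAA : ∀ z, A (A z) = z + ⟪x, z⟫_ℂ • x) (hAx : A x = (a : ℂ) • x)
    (hx : ‖x‖ ^ 2 = a ^ 2 - 1) :
    IsPseudoUnitary ε (blockCLM A x x a) := by
  have hxx : ⟪x, x⟫_ℂ = (a : ℂ) ^ 2 - 1 := by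
    simp only [inner_self_eq_norm_sq_to_K, Complex.coe_algebraMap]; exact_mod_cast hx
  have hA' : ∀ z w, ⟪A z, w⟫_ℂ = ⟪z, A w⟫_ℂ := hA
  rw [isPseudoUnitary_iff_inner]
  rintro ⟨z, l⟩ ⟨w, c⟩
  change ⟪blockCLM A x x a (mk2 z l), ε (blockCLM A x x a (mk2 w c))⟫_ℂ =
    ⟪mk2 z l, ε (mk2 w c)⟫_ℂ
  have hAzAw : ⟪A z, A w⟫_ℂ = ⟪z, w⟫_ℂ + ⟪z, x⟫_ℂ * ⟪x, w⟫_ℂ := by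
    rw [hA', hAA, inner_add_right, inner_smul_right, mul_comm]
  have hAzx : ⟪A z, x⟫_ℂ = a * ⟪z, x⟫_ℂ := by rw [hA', hAx, inner_smul_right]
  have hxAw : ⟪x, A w⟫_ℂ = a * ⟪x, w⟫_ℂ := by
    rw [← hA', hAx, inner_smul_left, Complex.conj_ofReal]
  simp only [blockCLM_apply, hε, inner_mk2_mk2_s7, inner_neg_right, inner_add_left, inner_add_right,
    inner_smul_left, inner_smul_right, hAzAw, hAzx, hxAw, hxx, map_add, map_mul,
    Complex.conj_ofReal, inner_conj_symm]
  ring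

end Block

section LorentzFactor

variable {E : Type*} [SeminormedAddGroup E]

noncomputable def lorentzFactor (u : E) : ℝ := (Real.sqrt (1 - ‖u‖ ^ 2))⁻¹

lemma one_sub_norm_sq_pos {u : E} (hu : ‖u‖ < 1) : 0 < 1 - ‖u‖ ^ 2 := by
  nlinarith [norm_nonneg u]

lemma lorentzFactor_pos {u : E} (hu : ‖u‖ < 1) : 0 < lorentzFactor u := by
  have := one_sub_norm_sq_pos hu
  unfold lorentzFactor; positivity

lemma lorentzFactor_sq_mul {u : E} (hu : ‖u‖ < 1) : lorentzFactor u ^ 2 * (1 - ‖u‖ ^ 2) = 1 := by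
  have := one_sub_norm_sq_pos hu
  rw [lorentzFactor, inv_pow, Real.sq_sqrt this.le, inv_mul_cancel₀ this.ne']

@[simp]
lemma lorentzFactor_neg (u : E) : lorentzFactor (-u) = lorentzFactor u := by
  simp [lorentzFactor]

end LorentzFactor

section Boost

variable {H : Type*} [NormedAddCommGroup H] [InnerProductSpace ℂ H]

noncomputable def boostOp (u : H) : H →L[ℂ] H :=
  ContinuousLinearMap.id ℂ H +
    (((lorentzFactor u : ℂ) - 1) / (‖u‖ ^ 2 : ℂ)) • (innerSL ℂ u).smulRight u

lemma boostOp_apply (u z : H) :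
    boostOp u z = z + (((lorentzFactor u : ℂ) - 1) / (‖u‖ ^ 2 : ℂ)) • (⟪u, z⟫_ℂ • u) := by
  simp [boostOp]

@[simp]
lemma boostOp_neg (u : H) : boostOp (-u) = boostOp u := by
  ext z; simp [boostOp_apply]

lemma boostOp_isSymmetric (u : H) : (boostOp u).IsSymmetric := by
  intro z w
  simp only [coe_coe, boostOp_apply, inner_add_left, inner_add_right, inner_smul_left,
    inner_smul_right, map_div₀, map_sub, map_one, map_pow, Complex.conj_ofReal, inner_conj_symm]
  ring

lemma boostOp_self (u : H) : boostOp u u = (lorentzFactor u : ℂ) • u := by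
  rcases eq_or_ne u 0 with rfl | hu
  · simp
  have hu1 : (‖u‖ : ℂ) ≠ 0 := by simpa using hu
  simp only [boostOp_apply, inner_self_eq_norm_sq_to_K, Complex.coe_algebraMap, smul_smul]
  match_scalars
  field_simp
  ring

lemma boostOp_boostOp {u : H} (hu : ‖u‖ < 1) (z : H) :
    boostOp u (boostOp u z) = z + ⟪lorentzFactor u • u, z⟫_ℂ • lorentzFactor u • u := by
  rcases eq_or_ne u 0 with rfl | hu0
  · simp [boostOp_apply]
  have hu1 : (‖u‖ : ℂ) ≠ 0 := by simpa using hu0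
  have hγ : (lorentzFactor u : ℂ) ^ 2 * (1 - (‖u‖ : ℂ) ^ 2) = 1 := by
    exact_mod_cast lorentzFactor_sq_mul hu
  simp only [← Complex.coe_smul, boostOp_apply, inner_add_right, inner_smul_right, inner_smul_left,
    inner_self_eq_norm_sq_to_K, Complex.coe_algebraMap, Complex.conj_ofReal, smul_smul]
  match_scalars
  · ring
  · field_simp
    linear_combination ⟪u, z⟫_ℂ * hγ

noncomputable def boost (u : H) : ExtH H →L[ℂ] ExtH H :=
  blockCLM (boostOp u) (lorentzFactor u • u) (lorentzFactor u • u) (lorentzFactor u)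

lemma boost_isPseudoUnitary [CompleteSpace H] {ε : ExtH H →L[ℂ] ExtH H}
    (hε : ∀ z l, ε (mk2 z l) = mk2 (-z) l) {u : H} (hu : ‖u‖ < 1) :
    IsPseudoUnitary ε (boost u) := by
  refine blockCLM_isPseudoUnitary hε (boostOp_isSymmetric u) (boostOp_boostOp hu) ?_ ?_
  · rw [← Complex.coe_smul, map_smul, boostOp_self]
  · rw [norm_smul, mul_pow, Real.norm_of_nonneg (lorentzFactor_pos hu).le]
    linear_combination -lorentzFactor_sq_mul hu

lemma boost_mk2_zero (u : H) (c : ℂ) :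
    boost u (mk2 0 c) = mk2 ((c * lorentzFactor u) • u) (c * lorentzFactor u) := by
  simp [boost, blockCLM_apply, ← Complex.coe_smul, smul_smul]

lemma boost_neg_mk2_self (u : H) :
    boost (-u) (mk2 u 1) = mk2 0 (lorentzFactor u * (1 - ‖u‖ ^ 2) : ℝ) := by
  simp only [boost, boostOp_neg, lorentzFactor_neg, blockCLM_apply, boostOp_self, one_smul,
    mk2_eq_mk2_iff, ← Complex.coe_smul]
  constructor
  · module
  · simp only [inner_smul_left, inner_neg_left, inner_self_eq_norm_sq_to_K, Complex.coe_algebraMap,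
      Complex.conj_ofReal]
    push_cast
    ring

end Boost

open ContinuousLinearMap in
/-- `U₁(H)` acts transitively on the Hilbert ball; moreover, for `u` in the
ball and `m = (1 − ‖u‖²)^{-1/2}`, the operator with block data
`(I + (m−1)·(z ↦ ⟨u,z⟩u/‖u‖²), m•u, m•u, m)` belongs to `U₁(H)` and sends `0` to `u`. -/
theorem moebius_action_transitive
    {H : Type*} [NormedAddCommGroup H] [InnerProductSpace ℂ H] [CompleteSpace H]
    (ε : ExtH H →L[ℂ] ExtH H) (hε : ∀ (z : H) (l : ℂ), ε (mk2 z l) = mk2 (-z) l) :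
    (∀ u v : H, ‖u‖ < 1 → ‖v‖ < 1 →
      ∃ (T : ExtH H →L[ℂ] ExtH H) (A : H →L[ℂ] H) (x y : H) (a : ℂ),
        (∀ (z : H) (l : ℂ),
          T (mk2 z l) = mk2 (A z + l • x) ((inner ℂ y z : ℂ) + l * a)) ∧
        adjoint T ∘L ε ∘L T = ε ∧
        moebius A x y a u = v) ∧
    (∀ u : H, ‖u‖ < 1 →
      ∀ m : ℝ, m = (Real.sqrt (1 - ‖u‖ ^ 2))⁻¹ →
      ∃ (T : ExtH H →L[ℂ] ExtH H) (A : H →L[ℂ] H),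
        (∀ z : H, A z = z + (((m : ℂ) - 1) / (‖u‖ ^ 2 : ℂ)) • ((inner ℂ u z : ℂ) • u)) ∧
        (∀ (z : H) (l : ℂ),
          T (mk2 z l) = mk2 (A z + l • (m • u)) ((inner ℂ (m • u) z : ℂ) + l * m)) ∧
        adjoint T ∘L ε ∘L T = ε ∧
        moebius A (m • u) (m • u) (m : ℂ) 0 = u) := by
  refine ⟨fun u v hu hv => ?_, fun u hu m hm => ?_⟩
  · obtain ⟨A, x, y, a, hT⟩ := exists_blockCLM_eq (boost v ∘L boost (-u))
    refine ⟨boost v ∘L boost (-u), A, x, y, a, fun z l => by rw [hT, blockCLM_apply], ?_, ?_⟩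
    · exact (boost_isPseudoUnitary hε hv).comp (boost_isPseudoUnitary hε (by rwa [norm_neg]))
    · refine moebius_eq_of_blockCLM_apply
        (c := ((lorentzFactor u * (1 - ‖u‖ ^ 2) : ℝ) : ℂ) * lorentzFactor v) ?_ ?_
      · rw [← hT, comp_apply, boost_neg_mk2_self, boost_mk2_zero]
      · exact_mod_cast (mul_pos (mul_pos (lorentzFactor_pos hu) (one_sub_norm_sq_pos hu))
          (lorentzFactor_pos hv)).ne'
  · obtain rfl : m = lorentzFactor u := hm
    refine ⟨boost u, boostOp u, boostOp_apply u, fun z l => blockCLM_apply _ _ _ _ z l,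
      boost_isPseudoUnitary hε hu, moebius_eq_of_blockCLM_apply (c := lorentzFactor u) ?_ ?_⟩
    · exact (boost_mk2_zero u 1).trans (by rw [one_mul])
    · exact_mod_cast (lorentzFactor_pos hu).ne'
end

section
/- The map C ↦ f_C is injective: if C is a bounded operator on H̃ and f_C(z) = 0 for every z ∈ B_H, then C = 0. -/
/-- The Kähler function `f_C(z) = ⟨ẑ, C ẑ⟩/(1 − ‖z‖²)` on the Hilbert ball, where
`ẑ = (z,1) ∈ H̃`. -/
noncomputable def kahlerFun {H : Type*} [NormedAddCommGroup H] [InnerProductSpace ℂ H]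
    (C : ExtH H →L[ℂ] ExtH H) (z : H) : ℂ :=
  ((1 - ‖z‖ ^ 2 : ℝ) : ℂ)⁻¹ * (inner ℂ (mk2 z 1) (C (mk2 z 1)) : ℂ)

/-!
The quadratic form `q x = ⟪x, C x⟫` satisfies `q (a • x) = |a|² q x`, so its vanishing at every
`(z, 1)` with `‖z‖ < 1` propagates to the open cone `‖z‖ < |a|` of `H̃`. A quadratic form that
vanishes near a point vanishes identically (restrict it to the lines through that point), and over
`ℂ` polarization recovers `C` from `q`.
-/

open Filter Topology

section QuadraticForm

variable {𝕜 E : Type*} [RCLike 𝕜] [NormedAddCommGroup E] [InnerProductSpace 𝕜 E]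

theorem inner_add_ofReal_smul_map_add_ofReal_smul (T : E →ₗ[𝕜] E) (x y : E) (s : ℝ) :
    inner 𝕜 (x + (s : 𝕜) • y) (T (x + (s : 𝕜) • y)) =
      inner 𝕜 x (T x) + s * (inner 𝕜 x (T y) + inner 𝕜 y (T x)) + s ^ 2 * inner 𝕜 y (T y) := by
  simp only [map_add, map_smul, inner_add_left, inner_add_right, inner_smul_left,
    inner_smul_right, RCLike.conj_ofReal]
  ring

theorem inner_map_self_eq_zero_of_eventually_nhds (T : E →ₗ[𝕜] E) {x₀ : E}
    (h : ∀ᶠ x in 𝓝 x₀, inner 𝕜 x (T x) = 0) (x : E) : inner 𝕜 x (T x) = 0 := by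
  have hline : Tendsto (fun s : ℝ => x₀ + (s : 𝕜) • x) (𝓝 0) (𝓝 x₀) := by
    have : Continuous fun s : ℝ => x₀ + (s : 𝕜) • x := by fun_prop
    simpa using this.tendsto 0
  have hs := hline.eventually h
  -- Comparing the parameters `s` and `2 * s` eliminates the linear coefficient.
  have hdouble : Tendsto (fun s : ℝ => 2 * s) (𝓝 0) (𝓝 0) := by
    simpa using (continuous_const_mul (2 : ℝ)).tendsto 0
  have h2s := hdouble.eventually hs
  obtain ⟨s, ⟨h1, h2⟩, hs0⟩ :=
    (((hs.and h2s).filter_mono nhdsWithin_le_nhds).and (self_mem_nhdsWithin (s := {0}ᶜ))).exists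
  have h0 : inner 𝕜 x₀ (T x₀) = 0 := by simpa using hs.self_of_nhds
  rw [inner_add_ofReal_smul_map_add_ofReal_smul, h0] at h1 h2
  have hs0' : ((s : ℝ) : 𝕜) ≠ 0 := by simpa using hs0
  have : (2 * (s : 𝕜) ^ 2) * inner 𝕜 x (T x) = 0 := by
    push_cast at h2
    linear_combination h2 - 2 * h1
  simpa [hs0'] using this

end QuadraticForm

section ExtH

variable {H : Type*} [NormedAddCommGroup H] [InnerProductSpace ℂ H]

theorem smul_mk2_one (a : ℂ) (z : H) : a • mk2 z 1 = mk2 (a • z) a := by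
  rw [mk2, mk2, WithLp.equiv_symm_apply, ← WithLp.toLp_smul,
    Prod.smul_mk, smul_eq_mul, mul_one]

theorem inner_mk2_map_mk2_eq_zero_of_kahlerFun_eq_zero (C : ExtH H →L[ℂ] ExtH H) {z : H}
    (hz : ‖z‖ < 1) (h : kahlerFun C z = 0) :
    inner ℂ (mk2 z 1) (C (mk2 z 1)) = 0 := by
  have hk : (1 - ‖z‖ ^ 2 : ℝ) ≠ 0 := by nlinarith [norm_nonneg z]
  rw [kahlerFun, mul_eq_zero, inv_eq_zero, Complex.ofReal_eq_zero] at h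
  exact h.resolve_left hk

theorem inner_map_self_eq_zero_of_norm_fst_lt_norm_snd (C : ExtH H →L[ℂ] ExtH H)
    (hC : ∀ z : H, ‖z‖ < 1 → inner ℂ (mk2 z 1) (C (mk2 z 1)) = 0) {x : ExtH H}
    (hx : ‖x.fst‖ < ‖x.snd‖) : inner ℂ x (C x) = 0 := by
  have ha : x.snd ≠ 0 := norm_pos_iff.1 ((norm_nonneg _).trans_lt hx)
  have hx' : x = x.snd • mk2 (x.snd⁻¹ • x.fst) 1 := by
    rw [smul_mk2_one, smul_inv_smul₀ ha]
    rfl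
  have hz : ‖x.snd⁻¹ • x.fst‖ < 1 := by
    rw [norm_smul, norm_inv, inv_mul_lt_one₀ (norm_pos_iff.2 ha)]
    exact hx
  rw [hx', map_smul, inner_smul_left, inner_smul_right, hC _ hz, mul_zero, mul_zero]

end ExtH

theorem kahlerFun_injective_general
    {H : Type*} [NormedAddCommGroup H] [InnerProductSpace ℂ H]
    (C : ExtH H →L[ℂ] ExtH H) (hC : ∀ z : H, ‖z‖ < 1 → kahlerFun C z = 0) :
    C = 0 := by
  have hball (z : H) (hz : ‖z‖ < 1) : inner ℂ (mk2 z 1) (C (mk2 z 1)) = 0 :=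
    inner_mk2_map_mk2_eq_zero_of_kahlerFun_eq_zero C hz (hC z hz)
  have hcone : IsOpen {x : ExtH H | ‖x.fst‖ < ‖x.snd‖} :=
    isOpen_lt (continuous_norm.comp (WithLp.continuous_fst 2 H ℂ))
      (continuous_norm.comp (WithLp.continuous_snd 2 H ℂ))
  have hnhds : ∀ᶠ x in 𝓝 (mk2 (0 : H) 1), inner ℂ x (C x) = 0 :=
    eventually_of_mem (hcone.mem_nhds (by simp [mk2]))
      fun x hx => inner_map_self_eq_zero_of_norm_fst_lt_norm_snd C hball hx
  have hq := inner_map_self_eq_zero_of_eventually_nhds C.toLinearMap hnhds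
  exact ContinuousLinearMap.coe_injective <|
    (inner_map_self_eq_zero _).1 fun x => inner_eq_zero_symm.1 (hq x)

/-- the map `C ↦ f_C` is injective: if `f_C` vanishes on the Hilbert ball
then `C = 0`. -/
theorem kahlerFun_injective
    {H : Type*} [NormedAddCommGroup H] [InnerProductSpace ℂ H] [CompleteSpace H]
    (C : ExtH H →L[ℂ] ExtH H) (hC : ∀ z : H, ‖z‖ < 1 → kahlerFun C z = 0) :
    C = 0 :=
  kahlerFun_injective_general C hC
end

section
/- Define, for a bounded operator C on H̃, N(C) = sup { ‖C(z,1)‖ / √(1 + ‖z‖²) : z ∈ H, ‖z‖ < 1 }. If H ≠ {0}, then N is not submultiplicative with respect to the ε-product: there exist bounded operators C, C' on H̃ with N(C ∗ε C') > N(C)·N(C'). Concretely, for a unit vector v ∈ H, the operators C(z,λ) = (⟨v,z⟩·v, 0) and C'(z,λ) = (λ·v, 0) satisfy N(C ∗ε C') = 1, N(C) = 1/√2 and N(C') = 1. -/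
/-- The "ball" seminorm `N(C) = sup { ‖C(z,1)‖/√(1 + ‖z‖²) : ‖z‖ < 1 }` on operators
on `H̃`. -/
noncomputable def ballOpNorm {H : Type*} [NormedAddCommGroup H] [InnerProductSpace ℂ H]
    (C : ExtH H →L[ℂ] ExtH H) : ℝ :=
  sSup { r : ℝ | ∃ z : H, ‖z‖ < 1 ∧ r = ‖C (mk2 z 1)‖ / Real.sqrt (1 + ‖z‖ ^ 2) }

/-!
Both `C = |(v,0)⟩⟨(v,0)|` and `C' = |(v,0)⟩⟨(0,1)|` are rank-one operators. `C'` and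
`C ∗ε C'` send every `(z,1)` to a unit vector (`(v,0)`, resp. `(-v,0)`), so their `N` is the
supremum of `1/√(1+‖z‖²)`, namely `1`, attained at `z = 0`. For `C` the ratio is
`|⟨v,z⟩|/√(1+‖z‖²) ≤ t/√(1+t²)` with `t = ‖z‖ < 1`, and taking `z = t v` with `t → 1⁻`
shows that the supremum is `1/√2`.
-/

open Filter Topology

lemma div_sqrt_one_add_sq_le {t : ℝ} (h0 : 0 ≤ t) (h1 : t ≤ 1) :
    t / √(1 + t ^ 2) ≤ 1 / √2 := by
  rw [div_le_div_iff₀ (by positivity) (by positivity), one_mul]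
  calc t * √2 = √(t ^ 2 * 2) := by rw [Real.sqrt_mul (sq_nonneg t), Real.sqrt_sq h0]
    _ ≤ √(1 + t ^ 2) := Real.sqrt_le_sqrt (by nlinarith)

lemma tendsto_div_sqrt_one_add_sq :
    Tendsto (fun t : ℝ => t / √(1 + t ^ 2)) (𝓝[<] 1) (𝓝 (1 / √2)) := by
  have hcont : Continuous (fun t : ℝ => t / √(1 + t ^ 2)) :=
    continuous_id.div (by fun_prop) fun t => (Real.sqrt_pos.2 (by positivity)).ne'
  simpa [one_add_one_eq_two] using (hcont.tendsto 1).mono_left nhdsWithin_le_nhds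

section ExtH

variable {H : Type*} [NormedAddCommGroup H] [InnerProductSpace ℂ H]

lemma norm_mk2 (z : H) (a : ℂ) : ‖mk2 z a‖ = √(‖z‖ ^ 2 + ‖a‖ ^ 2) :=
  WithLp.prod_norm_eq_of_L2 _

lemma norm_mk2_zero (z : H) : ‖mk2 z 0‖ = ‖z‖ := by
  simp [norm_mk2]

lemma norm_mk2_one (z : H) : ‖mk2 z 1‖ = √(1 + ‖z‖ ^ 2) := by
  simp [norm_mk2, add_comm]

lemma inner_mk2_s14 (x y : H) (a b : ℂ) :
    inner ℂ (mk2 x a) (mk2 y b) = inner ℂ x y + inner ℂ a b := by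
  simp [mk2, WithLp.prod_inner_apply]

lemma smul_mk2 (c : ℂ) (z : H) (a : ℂ) : c • mk2 z a = mk2 (c • z) (c * a) :=
  rfl

lemma norm_apply_mk2_one_div_le_opNorm (C : ExtH H →L[ℂ] ExtH H) (z : H) :
    ‖C (mk2 z 1)‖ / √(1 + ‖z‖ ^ 2) ≤ ‖C‖ := by
  rw [← norm_mk2_one]
  exact C.ratio_le_opNorm _

lemma le_ballOpNorm (C : ExtH H →L[ℂ] ExtH H) {z : H} (hz : ‖z‖ < 1) :
    ‖C (mk2 z 1)‖ / √(1 + ‖z‖ ^ 2) ≤ ballOpNorm C := by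
  refine le_csSup ⟨‖C‖, ?_⟩ ⟨z, hz, rfl⟩
  rintro r ⟨w, -, rfl⟩
  exact norm_apply_mk2_one_div_le_opNorm C w

lemma ballOpNorm_le {C : ExtH H →L[ℂ] ExtH H} {M : ℝ}
    (h : ∀ z : H, ‖z‖ < 1 → ‖C (mk2 z 1)‖ / √(1 + ‖z‖ ^ 2) ≤ M) : ballOpNorm C ≤ M := by
  refine csSup_le ⟨_, 0, by simp, rfl⟩ ?_
  rintro r ⟨z, hz, rfl⟩
  exact h z hz

lemma ballOpNorm_eq_one_of_norm_apply_eq_one {C : ExtH H →L[ℂ] ExtH H}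
    (h : ∀ z : H, ‖C (mk2 z 1)‖ = 1) : ballOpNorm C = 1 := by
  refine le_antisymm (ballOpNorm_le fun z _ => ?_) ?_
  · rw [h, div_le_one (by positivity), Real.one_le_sqrt]
    exact le_add_of_nonneg_right (by positivity)
  · simpa [h] using le_ballOpNorm C (z := 0) (by simp)

lemma ballOpNorm_eq_one_div_sqrt_two_of_norm_apply_eq_norm_inner
    {C : ExtH H →L[ℂ] ExtH H} {v : H} (hv : ‖v‖ = 1)
    (h : ∀ z : H, ‖C (mk2 z 1)‖ = ‖(inner ℂ v z : ℂ)‖) : ballOpNorm C = 1 / √2 := by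
  refine le_antisymm (ballOpNorm_le fun z hz => ?_) ?_
  · calc ‖C (mk2 z 1)‖ / √(1 + ‖z‖ ^ 2) ≤ ‖z‖ / √(1 + ‖z‖ ^ 2) := by
          gcongr
          simpa [h, hv] using norm_inner_le_norm v z
      _ ≤ 1 / √2 := div_sqrt_one_add_sq_le (norm_nonneg z) hz.le
  · refine le_of_tendsto tendsto_div_sqrt_one_add_sq ?_
    filter_upwards [Ioo_mem_nhdsLT zero_lt_one] with t ht
    have hnorm : ‖(t : ℂ) • v‖ = t := by simp [norm_smul, hv, abs_of_pos ht.1]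
    have hinner : ‖(inner ℂ v ((t : ℂ) • v) : ℂ)‖ = t := by
      simp [inner_self_eq_norm_sq_to_K, hv, abs_of_pos ht.1]
    have hle := le_ballOpNorm C (z := (t : ℂ) • v) (by rw [hnorm]; exact ht.2)
    rwa [h, hinner, hnorm] at hle

end ExtH

open ContinuousLinearMap in
theorem ballOpNorm_not_submultiplicative_general
    {H : Type*} [NormedAddCommGroup H] [InnerProductSpace ℂ H]
    (ε : ExtH H →L[ℂ] ExtH H) (hε : ∀ (z : H) (l : ℂ), ε (mk2 z l) = mk2 (-z) l)
    (v : H) (hv : ‖v‖ = 1) :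
    ∃ C C' : ExtH H →L[ℂ] ExtH H,
      (∀ (z : H) (l : ℂ), C (mk2 z l) = mk2 ((inner ℂ v z : ℂ) • v) 0) ∧
      (∀ (z : H) (l : ℂ), C' (mk2 z l) = mk2 (l • v) 0) ∧
      ballOpNorm (C ∘L ε ∘L C') = 1 ∧
      ballOpNorm C = 1 / Real.sqrt 2 ∧
      ballOpNorm C' = 1 ∧
      ballOpNorm (C ∘L ε ∘L C') > ballOpNorm C * ballOpNorm C' := by
  set C := InnerProductSpace.rankOne ℂ (mk2 v 0) (mk2 v 0)
  set C' := InnerProductSpace.rankOne ℂ (mk2 v 0) (mk2 (0 : H) 1)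
  have hC (z : H) (l : ℂ) : C (mk2 z l) = mk2 ((inner ℂ v z : ℂ) • v) 0 := by
    simp only [C, InnerProductSpace.rankOne_apply, inner_mk2_s14, smul_mk2]
    simp
  have hC' (z : H) (l : ℂ) : C' (mk2 z l) = mk2 (l • v) 0 := by
    simp only [C', InnerProductSpace.rankOne_apply, inner_mk2_s14, smul_mk2]
    simp
  have hNCεC' : ballOpNorm (C ∘L ε ∘L C') = 1 :=
    ballOpNorm_eq_one_of_norm_apply_eq_one fun z => by
      simp [hC, hC', hε, norm_mk2_zero, hv, inner_self_eq_norm_sq_to_K]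
  have hNC : ballOpNorm C = 1 / √2 :=
    ballOpNorm_eq_one_div_sqrt_two_of_norm_apply_eq_norm_inner hv fun z => by
      simp [hC, norm_mk2_zero, norm_smul, hv]
  have hNC' : ballOpNorm C' = 1 :=
    ballOpNorm_eq_one_of_norm_apply_eq_one fun z => by simp [hC', norm_mk2_zero, hv]
  refine ⟨C, C', hC, hC', hNCεC', hNC, hNC', ?_⟩
  rw [hNCεC', hNC, hNC', mul_one, gt_iff_lt, div_lt_one (by positivity)]
  exact Real.one_lt_sqrt_two

open ContinuousLinearMap in
/-- if `H ≠ {0}`, the norm `N` is not submultiplicative for the ε-product: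
for a unit vector `v`, the operators `C(z,λ) = (⟨v,z⟩v, 0)` and `C'(z,λ) = (λv, 0)`
satisfy `N(C ∗ε C') = 1 > (1/√2)·1 = N(C)·N(C')`. -/
theorem ballOpNorm_not_submultiplicative
    {H : Type*} [NormedAddCommGroup H] [InnerProductSpace ℂ H] [CompleteSpace H]
    (ε : ExtH H →L[ℂ] ExtH H) (hε : ∀ (z : H) (l : ℂ), ε (mk2 z l) = mk2 (-z) l)
    (v : H) (hv : ‖v‖ = 1) :
    ∃ C C' : ExtH H →L[ℂ] ExtH H,
      (∀ (z : H) (l : ℂ), C (mk2 z l) = mk2 ((inner ℂ v z : ℂ) • v) 0) ∧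
      (∀ (z : H) (l : ℂ), C' (mk2 z l) = mk2 (l • v) 0) ∧
      ballOpNorm (C ∘L ε ∘L C') = 1 ∧
      ballOpNorm C = 1 / Real.sqrt 2 ∧
      ballOpNorm C' = 1 ∧
      ballOpNorm (C ∘L ε ∘L C') > ballOpNorm C * ballOpNorm C' :=
  ballOpNorm_not_submultiplicative_general ε hε v hv
end

section
/- Let a ∈ ℝ and b ∈ ℂ with α := |b|² − a² > 0, and let X be the 2×2 complex matrix with rows (i·a, b) and (conj(b), −i·a). Then X² = α·I, and for every t ∈ ℝ the matrix exponential satisfies exp(t·X) = cosh(√α·t)·I + (sinh(√α·t)/√α)·X. -/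
open Complex

/-! If `x ^ 2 = r ^ 2`, the even and odd parts of the exponential series of `z • x` are the
series of `cosh (r z)` and of `sinh (r z) / r` times `x`. -/

open NormedSpace in
theorem exp_smul_of_sq_eq_sq_smul_one {A : Type*} [Ring A] [Algebra ℂ A] [TopologicalSpace A]
    [IsTopologicalRing A] [ContinuousSMul ℂ A] [T2Space A] {x : A} {r : ℂ} (hr : r ≠ 0)
    (hx : x ^ 2 = r ^ 2 • (1 : A)) (z : ℂ) :
    exp (z • x) = cosh (r * z) • (1 : A) + (sinh (r * z) / r) • x := by
  have hpow_even (n : ℕ) : (z • x) ^ (2 * n) = (r * z) ^ (2 * n) • (1 : A) := by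
    rw [smul_pow, pow_mul x, hx, smul_pow, one_pow, smul_smul, ← pow_mul, mul_pow, mul_comm]
  rw [exp_eq_tsum ℂ]
  refine HasSum.tsum_eq (HasSum.even_add_odd ?_ ?_)
  · convert (hasSum_cosh (r * z)).smul_const (1 : A) using 2 with n
    rw [hpow_even, smul_smul, div_eq_inv_mul]
  · convert ((hasSum_sinh (r * z)).div_const r).smul_const x using 2 with n
    rw [pow_succ, hpow_even, smul_mul_assoc, one_mul, smul_smul, smul_smul]
    congr 1
    field_simp
    ring

theorem Matrix.traceless_fin_two_sq {R : Type*} [CommRing R] (p q s : R) :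
    !![p, q; s, -p] ^ 2 = (p ^ 2 + q * s) • (1 : Matrix (Fin 2) (Fin 2) R) := by
  rw [sq, Matrix.mul_fin_two, Matrix.one_fin_two, Matrix.smul_of]
  ext i j
  fin_cases i <;> fin_cases j <;> simp <;> ring

/-- for `a ∈ ℝ`, `b ∈ ℂ` with `α = |b|² − a² > 0`, the matrix
`X = !![i·a, b; conj b, −i·a]` satisfies `X² = α·I` and
`exp(t·X) = cosh(√α·t)·I + (sinh(√α·t)/√α)·X` for every `t ∈ ℝ`. -/
theorem exp_of_su_one_one_generator (a : ℝ) (b : ℂ)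
    (α : ℝ) (hα : α = ‖b‖ ^ 2 - a ^ 2) (hpos : 0 < α)
    (X : Matrix (Fin 2) (Fin 2) ℂ)
    (hX : X = !![Complex.I * a, b; (starRingEnd ℂ) b, -(Complex.I * a)]) :
    X ^ 2 = (α : ℂ) • (1 : Matrix (Fin 2) (Fin 2) ℂ) ∧
    ∀ t : ℝ,
      NormedSpace.exp ((t : ℂ) • X)
        = ((Real.cosh (Real.sqrt α * t) : ℝ) : ℂ) • (1 : Matrix (Fin 2) (Fin 2) ℂ)
          + ((Real.sinh (Real.sqrt α * t) / Real.sqrt α : ℝ) : ℂ) • X := by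
  have hX2 : X ^ 2 = (α : ℂ) • (1 : Matrix (Fin 2) (Fin 2) ℂ) := by
    rw [hX, Matrix.traceless_fin_two_sq, mul_conj, normSq_eq_norm_sq, hα]
    push_cast
    congr 1
    linear_combination (a : ℂ) ^ 2 * I_sq
  refine ⟨hX2, fun t => ?_⟩
  have hsqrt : ((Real.sqrt α : ℝ) : ℂ) ^ 2 = α := by exact_mod_cast Real.sq_sqrt hpos.le
  have hsqrt0 : ((Real.sqrt α : ℝ) : ℂ) ≠ 0 := by exact_mod_cast (Real.sqrt_pos.2 hpos).ne'
  rw [exp_smul_of_sq_eq_sq_smul_one hsqrt0 (hsqrt ▸ hX2)]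
  push_cast
  rfl
end
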